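/- Let H be an algebra subgroup of an algebra group G = 1 + J over F_q, and suppose: (1) no two distinct superclasses of H are contained in the same superclass of G; and (2') (h−1)y+1 ∈ H for all y ∈ G and h ∈ H. Then SInd_H^G(χ) = Ind_H^G(χ) for every superclass function χ of H. -/

import Mathlib

/-!
STATEMENT 5: Let H be an algebra subgroup of an algebra group G = 1 + J over F_q, and
suppose (1) no two distinct superclasses of H are contained in the same superclass of G,
and (2′) (h−1)y+1 ∈ H for all y ∈ G and h ∈ H.  Then SInd_H^G(χ) = Ind_H^G(χ)
for every superclass function χ of H.
-/
open scoped Classical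

noncomputable section

def setFinset {α : Type*} [Fintype α] (S : Set α) : Finset α :=
  Finset.univ.filter (· ∈ S)

/-- The algebra group `1 + J` attached to a nilpotent algebra `J`. -/
def algebraGroup {A : Type*} [Ring A] (J : Set A) : Set A :=
  (fun a => 1 + a) '' J

/-- `χ` is constant on the superclasses of `G`: `u ~ v` iff `v − 1 ∈ G(u−1)G`. -/
def IsSuperclassFn {A : Type*} [Ring A] (G : Set A) (χ : A → ℂ) : Prop :=
  ∀ u ∈ G, ∀ v ∈ G, (∃ x ∈ G, ∃ y ∈ G, v - 1 = x * (u - 1) * y) → χ u = χ v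

/-- Superinduction `SInd_H^G(χ)(g) = (1/(|G||H|)) Σ_{x,y∈G} χ̇(x(g−1)y + 1)`. -/
def SInd {A : Type*} [Ring A] [Fintype A] (G H : Set A) (χ : A → ℂ) (g : A) : ℂ :=
  (((setFinset G).card : ℂ) * ((setFinset H).card : ℂ))⁻¹ *
    ∑ x ∈ setFinset G, ∑ y ∈ setFinset G,
      if x * (g - 1) * y + 1 ∈ H then χ (x * (g - 1) * y + 1) else 0

/-- Induction `Ind_H^G(χ)(g) = (1/|H|) Σ_{y∈G} χ̇(y⁻¹ g y)`. -/
def Ind {A : Type*} [Ring A] [Fintype A] (G H : Set A) (χ : A → ℂ) (g : A) : ℂ :=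
  ((setFinset H).card : ℂ)⁻¹ *
    ∑ y ∈ setFinset G,
      if Ring.inverse y * g * y ∈ H then χ (Ring.inverse y * g * y) else 0

/-!
Write `χ̇ = zeroExtend H χ` for the extension of `χ` by zero. Right stability (2′) says that `u ↦ (u - 1) y + 1`
maps `H` to itself for `y ∈ G` (hence, `G` being a group, also its complement), and `u` and
`(u - 1) y + 1` lie in the same superclass of `G`, hence by (1) of `H`; so `χ̇` is invariant
under these maps. In `SInd` the inner sum over `y` therefore collapses to `|G| χ̇(x(g - 1) + 1)`,
and in `Ind` the summand `χ̇(y⁻¹ g y) = χ̇(y⁻¹(g - 1) y + 1)` equals `χ̇(y⁻¹(g - 1) + 1)`, so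
inverting the summation variable gives the same sum.
-/

open Finset
open scoped Ring

theorem mem_setFinset {α : Type*} [Fintype α] {S : Set α} {a : α} : a ∈ setFinset S ↔ a ∈ S := by
  simp [setFinset]

section AlgebraGroup

variable {A : Type*} [Ring A]

theorem mem_algebraGroup {S : Set A} {a : A} : a ∈ algebraGroup S ↔ a - 1 ∈ S :=
  ⟨by rintro ⟨b, hb, rfl⟩; simpa using hb, fun h => ⟨a - 1, h, add_sub_cancel 1 a⟩⟩

variable {S : Type*} [SetLike S A]

theorem one_mem_algebraGroup [ZeroMemClass S A] (J : S) : (1 : A) ∈ algebraGroup (J : Set A) :=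
  mem_algebraGroup.2 (by rw [sub_self]; exact zero_mem J)

theorem isNilpotent_of_forall_list_prod_eq_zero {J : Set A}
    (hnil : ∃ k : ℕ, ∀ l : List A, (∀ x ∈ l, x ∈ J) → k ≤ l.length → l.prod = 0)
    {a : A} (ha : a ∈ J) : IsNilpotent a := by
  obtain ⟨k, hk⟩ := hnil
  refine ⟨k, ?_⟩
  simpa using hk (List.replicate k a) (fun x hx => List.eq_of_mem_replicate hx ▸ ha) (by simp)

theorem pow_succ_mem [NonUnitalSubsemiringClass S A] (J : S) {a : A} (ha : a ∈ J) (n : ℕ) :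
    a ^ (n + 1) ∈ J := by
  induction n with
  | zero => simpa using ha
  | succ n ih => rw [pow_succ]; exact mul_mem ih ha

variable [NonUnitalSubringClass S A] {J : S}

/-- The inverse of `1 + a` is the finite geometric series `∑ (-a)ⁱ`. -/
theorem isUnit_and_inverse_mem_algebraGroup (hJ : ∀ a ∈ J, IsNilpotent a) {x : A}
    (hx : x ∈ algebraGroup (J : Set A)) :
    IsUnit x ∧ x⁻¹ʳ ∈ algebraGroup (J : Set A) := by
  obtain ⟨a, ha, rfl⟩ := hx
  obtain ⟨n, hn⟩ := (hJ a ha).neg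
  have hn' : (-a) ^ (n + 1) = 0 := by rw [pow_succ, hn, zero_mul]
  set z := ∑ i ∈ range (n + 1), (-a) ^ i with hz
  have hr : (1 + a) * z = 1 := by simpa [hn'] using mul_neg_geom_sum (-a) (n + 1)
  have hl : z * (1 + a) = 1 := by simpa [hn'] using geom_sum_mul_neg (-a) (n + 1)
  have hinv : (1 + a)⁻¹ʳ = z := Ring.inverse_unit ⟨1 + a, z, hr, hl⟩
  refine ⟨⟨⟨1 + a, z, hr, hl⟩, rfl⟩, ?_⟩
  rw [hinv, mem_algebraGroup, hz, sum_range_succ', pow_zero, add_sub_cancel_right]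
  exact sum_mem fun i _ => pow_succ_mem J (neg_mem ha) i

end AlgebraGroup

section Superclass

variable {A : Type*} [Ring A]

def SuperclassRel (G : Set A) (u v : A) : Prop :=
  ∃ x ∈ G, ∃ y ∈ G, v - 1 = x * (u - 1) * y

def zeroExtend (H : Set A) (χ : A → ℂ) (a : A) : ℂ :=
  if a ∈ H then χ a else 0

theorem SInd_eq_sum_zeroExtend [Fintype A] (G H : Set A) (χ : A → ℂ) (g : A) :
    SInd G H χ g = ((#(setFinset G) : ℂ) * #(setFinset H))⁻¹ *
      ∑ x ∈ setFinset G, ∑ y ∈ setFinset G, zeroExtend H χ (x * (g - 1) * y + 1) :=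
  rfl

theorem Ind_eq_sum_zeroExtend [Fintype A] (G H : Set A) (χ : A → ℂ) (g : A) :
    Ind G H χ g = (#(setFinset H) : ℂ)⁻¹ *
      ∑ y ∈ setFinset G, zeroExtend H χ (y⁻¹ʳ * g * y) :=
  rfl

variable {G H : Set A} {y : A}

theorem mul_add_one_mem_iff (hstab : ∀ y ∈ G, ∀ h ∈ H, (h - 1) * y + 1 ∈ H)
    (hunit : IsUnit y) (hy : y ∈ G) (hy' : y⁻¹ʳ ∈ G) (u : A) :
    (u - 1) * y + 1 ∈ H ↔ u ∈ H := by
  refine ⟨fun h => ?_, fun h => hstab y hy u h⟩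
  simpa [mul_assoc, Ring.mul_inverse_cancel y hunit] using hstab _ hy' _ h

theorem superclassRel_mul_add_one (h1 : (1 : A) ∈ G) (hy : y ∈ G) (u : A) :
    SuperclassRel G u ((u - 1) * y + 1) :=
  ⟨1, h1, y, hy, by rw [add_sub_cancel_right, one_mul]⟩

theorem zeroExtend_mul_add_one {χ : A → ℂ} (hχ : IsSuperclassFn H χ)
    (hsep : ∀ h ∈ H, ∀ h' ∈ H, SuperclassRel G h h' → SuperclassRel H h h')
    (hstab : ∀ y ∈ G, ∀ h ∈ H, (h - 1) * y + 1 ∈ H) (h1 : (1 : A) ∈ G)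
    (hunit : IsUnit y) (hy : y ∈ G) (hy' : y⁻¹ʳ ∈ G) (u : A) :
    zeroExtend H χ ((u - 1) * y + 1) = zeroExtend H χ u := by
  unfold zeroExtend
  by_cases hu : u ∈ H
  · have hu' : (u - 1) * y + 1 ∈ H := hstab y hy u hu
    rw [if_pos hu, if_pos hu']
    exact (hχ u hu _ hu' (hsep u hu _ hu' (superclassRel_mul_add_one h1 hy u))).symm
  · rw [if_neg hu, if_neg (mt (mul_add_one_mem_iff hstab hunit hy hy' u).1 hu)]

end Superclass

section Sums

variable {A M : Type*} [Ring A] [AddCommMonoid M] {s : Finset A} {ψ : A → M}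

theorem sum_inverse_eq_sum (hs : ∀ y ∈ s, IsUnit y ∧ y⁻¹ʳ ∈ s) (φ : A → M) :
    ∑ y ∈ s, φ y⁻¹ʳ = ∑ y ∈ s, φ y :=
  sum_nbij' Ring.inverse Ring.inverse (fun y hy => (hs y hy).2) (fun y hy => (hs y hy).2)
    (fun y hy => Ring.inverse_inverse (hs y hy).1) (fun y hy => Ring.inverse_inverse (hs y hy).1)
    fun _ _ => rfl

variable (hψ : ∀ u, ∀ y ∈ s, ψ ((u - 1) * y + 1) = ψ u)
include hψ

theorem sum_sum_mul_mul_add_one (c : A) :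
    ∑ x ∈ s, ∑ y ∈ s, ψ (x * c * y + 1) = #s • ∑ x ∈ s, ψ (x * c + 1) := by
  rw [smul_sum]
  refine sum_congr rfl fun x _ => ?_
  rw [← sum_const]
  refine sum_congr rfl fun y hy => ?_
  simpa using hψ (x * c + 1) y hy

theorem sum_conj_eq_sum_mul_sub_one_add_one (hs : ∀ y ∈ s, IsUnit y ∧ y⁻¹ʳ ∈ s) (g : A) :
    ∑ y ∈ s, ψ (y⁻¹ʳ * g * y) = ∑ x ∈ s, ψ (x * (g - 1) + 1) := by
  calc ∑ y ∈ s, ψ (y⁻¹ʳ * g * y) = ∑ y ∈ s, ψ (y⁻¹ʳ * (g - 1) + 1) :=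
        sum_congr rfl fun y hy => by
          have hconj : y⁻¹ʳ * g * y = (y⁻¹ʳ * (g - 1) + 1 - 1) * y + 1 := by
            rw [add_sub_cancel_right, mul_sub, mul_one, sub_mul,
              Ring.inverse_mul_cancel y (hs y hy).1, sub_add_cancel]
          rw [hconj, hψ _ y hy]
    _ = ∑ x ∈ s, ψ (x * (g - 1) + 1) := sum_inverse_eq_sum hs fun x => ψ (x * (g - 1) + 1)

end Sums

theorem sind_eq_ind_of_superclass_separation_and_right_stability_general
    (F : Type*) [Field F]
    (A : Type*) [Ring A] [Algebra F A] [Fintype A]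
    (J J' : NonUnitalSubalgebra F A)
    (hnil : ∃ k : ℕ, ∀ l : List A, (∀ x ∈ l, x ∈ J) → k ≤ l.length → l.prod = 0)
    (h1 : ∀ h ∈ algebraGroup (J' : Set A), ∀ h' ∈ algebraGroup (J' : Set A),
      (∃ x ∈ algebraGroup (J : Set A), ∃ y ∈ algebraGroup (J : Set A),
          h' - 1 = x * (h - 1) * y) →
      (∃ x ∈ algebraGroup (J' : Set A), ∃ y ∈ algebraGroup (J' : Set A),
          h' - 1 = x * (h - 1) * y))
    (h2' : ∀ y ∈ algebraGroup (J : Set A), ∀ h ∈ algebraGroup (J' : Set A),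
      (h - 1) * y + 1 ∈ algebraGroup (J' : Set A)) :
    ∀ χ : A → ℂ, IsSuperclassFn (algebraGroup (J' : Set A)) χ →
      ∀ g ∈ algebraGroup (J : Set A),
        SInd (algebraGroup (J : Set A)) (algebraGroup (J' : Set A)) χ g =
          Ind (algebraGroup (J : Set A)) (algebraGroup (J' : Set A)) χ g := by
  intro χ hχ g _
  set G := algebraGroup (J : Set A)
  set H := algebraGroup (J' : Set A)
  have hG : ∀ y ∈ setFinset G, IsUnit y ∧ y⁻¹ʳ ∈ setFinset G := fun y hy =>
    (isUnit_and_inverse_mem_algebraGroup (fun _ => isNilpotent_of_forall_list_prod_eq_zero hnil)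
      (mem_setFinset.1 hy)).imp_right mem_setFinset.2
  have hψ : ∀ u, ∀ y ∈ setFinset G, zeroExtend H χ ((u - 1) * y + 1) = zeroExtend H χ u :=
    fun u y hy => zeroExtend_mul_add_one hχ h1 h2' (one_mem_algebraGroup J) (hG y hy).1
      (mem_setFinset.1 hy) (mem_setFinset.1 (hG y hy).2) u
  have hcard : (#(setFinset G) : ℂ) ≠ 0 :=
    Nat.cast_ne_zero.2 (card_ne_zero_of_mem (mem_setFinset.2 (one_mem_algebraGroup J)))
  rw [SInd_eq_sum_zeroExtend, Ind_eq_sum_zeroExtend, sum_sum_mul_mul_add_one hψ,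
    sum_conj_eq_sum_mul_sub_one_add_one hψ hG, nsmul_eq_mul, mul_comm (#(setFinset G) : ℂ),
    mul_inv, mul_assoc, inv_mul_cancel_left₀ hcard]

theorem sind_eq_ind_of_superclass_separation_and_right_stability
    (F : Type*) [Field F] [Fintype F]
    (A : Type*) [Ring A] [Algebra F A] [Fintype A]
    (J J' : NonUnitalSubalgebra F A)
    (hnil : ∃ k : ℕ, ∀ l : List A, (∀ x ∈ l, x ∈ J) → k ≤ l.length → l.prod = 0)
    (hsub : (J' : Set A) ⊆ (J : Set A))
    (h1 : ∀ h ∈ algebraGroup (J' : Set A), ∀ h' ∈ algebraGroup (J' : Set A),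
      (∃ x ∈ algebraGroup (J : Set A), ∃ y ∈ algebraGroup (J : Set A),
          h' - 1 = x * (h - 1) * y) →
      (∃ x ∈ algebraGroup (J' : Set A), ∃ y ∈ algebraGroup (J' : Set A),
          h' - 1 = x * (h - 1) * y))
    (h2' : ∀ y ∈ algebraGroup (J : Set A), ∀ h ∈ algebraGroup (J' : Set A),
      (h - 1) * y + 1 ∈ algebraGroup (J' : Set A)) :
    ∀ χ : A → ℂ, IsSuperclassFn (algebraGroup (J' : Set A)) χ →
      ∀ g ∈ algebraGroup (J : Set A),
        SInd (algebraGroup (J : Set A)) (algebraGroup (J' : Set A)) χ g =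
          Ind (algebraGroup (J : Set A)) (algebraGroup (J' : Set A)) χ g :=
  sind_eq_ind_of_superclass_separation_and_right_stability_general F A J J' hnil h1 h2'
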